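/- Let U be an open convex set of d×d complex matrices containing the set D of density matrices, let f : U → ℝ be convex and differentiable with Hermitian gradient f', and let ρ be a nonsingular density matrix with ρ(α) := ρ_{f'(ρ)}(α). Then: (i) if ρ = ρ(α) for some α > 0, then ρ minimizes f on D, i.e., f(ρ) ≤ f(σ) for every density matrix σ; and (ii) conversely, if ρ minimizes f on D, then ρ = ρ(α) for every α > 0. -/

import Mathlib

open scoped Matrix ComplexOrder

noncomputable section

/-- The space of `d × d` complex matrices. -/
abbrev Mat (d : ℕ) := Matrix (Fin d) (Fin d) ℂ

/-- Matrix exponential of a Hermitian matrix, via the real continuous functional calculus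
(i.e. the functional calculus on the eigenvalues). -/
noncomputable def mexp {d : ℕ} (A : Mat d) : Mat d := cfc Real.exp A

/-- Matrix logarithm of a positive definite Hermitian matrix, via the real continuous
functional calculus. -/
noncomputable def mlog {d : ℕ} (A : Mat d) : Mat d := cfc Real.log A

/-- A density matrix: Hermitian, positive semidefinite, trace one. -/
def IsDensity {d : ℕ} (ρ : Mat d) : Prop := ρ.PosSemidef ∧ ρ.trace = 1

/-- The real part of the Hilbert–Schmidt inner product `tr (Xᴴ Y)` (which is real
when `X` and `Y` are Hermitian). -/
noncomputable def hsInner {d : ℕ} (X Y : Mat d) : ℝ := (Matrix.trace (Xᴴ * Y)).re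

/-- `tr (σ log σ) = ∑ᵢ λᵢ log λᵢ` over the eigenvalues of `σ` (the convention
`0 log 0 = 0` matches `Real.log 0 = 0`), via the functional calculus for `x ↦ x log x`. -/
noncomputable def trEnt {d : ℕ} (σ : Mat d) : ℝ :=
  (Matrix.trace (cfc (fun x : ℝ => x * Real.log x) σ)).re

/-- The quantum relative entropy `D(σ, ρ) = tr (σ log σ) - tr (σ log ρ)` (for `σ` a
density matrix and `ρ` a nonsingular density matrix). -/
noncomputable def qRelEnt {d : ℕ} (σ ρ : Mat d) : ℝ :=
  trEnt σ - (Matrix.trace (σ * mlog ρ)).re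

/-- The exponentiated-gradient step `ρ_G(α) = c⁻¹ exp (log ρ - α G)` where
`c = tr exp (log ρ - α G)`. -/
noncomputable def egStep {d : ℕ} (ρ G : Mat d) (α : ℝ) : Mat d :=
  (Matrix.trace (mexp (mlog ρ - α • G)))⁻¹ • mexp (mlog ρ - α • G)

attribute [local instance] Matrix.frobeniusNormedAddCommGroup Matrix.frobeniusNormedSpace

/-- `f` is (Fréchet) differentiable at `x` with gradient `g`, with respect to the real
inner product `Re tr (Xᴴ Y)`: the derivative is `V ↦ Re tr (gᴴ V)`. -/
def HasMatGradientAt {d : ℕ} (f : Mat d → ℝ) (g : Mat d) (x : Mat d) : Prop :=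
  ∃ L : Mat d →L[ℝ] ℝ, HasFDerivAt f L x ∧ ∀ V : Mat d, L V = (Matrix.trace (gᴴ * V)).re

variable {d : ℕ}

-- trace of cfc
lemma trace_cfc' {A : Mat d} (hA : A.IsHermitian) (f : ℝ → ℝ) :
    (cfc f A).trace = ∑ i, (f (hA.eigenvalues i) : ℂ) := by
  rw [hA.cfc_eq, Matrix.IsHermitian.cfc, Unitary.conjStarAlgAut_apply, Matrix.trace_mul_cycle]
  rw [show (star (hA.eigenvectorUnitary : Mat d)) * (hA.eigenvectorUnitary : Mat d) = 1 from
    Matrix.UnitaryGroup.star_mul_self _, one_mul, Matrix.trace_diagonal]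
  rfl

-- PSD of cfc
lemma posSemidef_cfc {A : Mat d} (hA : A.IsHermitian) (f : ℝ → ℝ)
    (hf : ∀ i, 0 ≤ f (hA.eigenvalues i)) : (cfc f A).PosSemidef := by
  rw [hA.cfc_eq, Matrix.IsHermitian.cfc, Unitary.conjStarAlgAut_apply, Matrix.star_eq_conjTranspose]
  exact (Matrix.posSemidef_diagonal_iff.mpr (fun i => by
    simpa using (hf i))).mul_mul_conjTranspose_same _

lemma spectrum_subset_pos {ρ : Mat d} (hρ : ρ.PosDef) : spectrum ℝ ρ ⊆ Set.Ioi 0 := by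
  rw [hρ.isHermitian.spectrum_real_eq_range_eigenvalues]
  rintro x ⟨i, rfl⟩
  exact hρ.eigenvalues_pos i

lemma mexp_mlog {ρ : Mat d} (hρ : ρ.PosDef) : mexp (mlog ρ) = ρ := by
  unfold mexp mlog
  have h1 : ContinuousOn Real.log (spectrum ℝ ρ) :=
    Real.continuousOn_log.mono (fun x hx => by
      simpa using ne_of_gt (spectrum_subset_pos hρ hx))
  rw [← cfc_comp Real.exp Real.log ρ hρ.1.isSelfAdjoint (by fun_prop) h1,
    Function.comp_def, cfc_congr (g := fun x => x) (fun x hx => Real.exp_log (spectrum_subset_pos hρ hx))]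
  exact cfc_id' ℝ ρ hρ.1.isSelfAdjoint

lemma mlog_mexp {A : Mat d} (hA : A.IsHermitian) : mlog (mexp A) = A := by
  unfold mexp mlog
  have h1 : ContinuousOn Real.log (Real.exp '' spectrum ℝ A) :=
    Real.continuousOn_log.mono (by rintro x ⟨y, -, rfl⟩; simp [Real.exp_ne_zero])
  rw [← cfc_comp Real.log Real.exp A hA.isSelfAdjoint h1 (by fun_prop),
    Function.comp_def, cfc_congr (g := fun x => x) (fun x hx => Real.log_exp x)]
  exact cfc_id' ℝ A hA.isSelfAdjoint

lemma mlog_smul {ρ : Mat d} (hρ : ρ.PosDef) {r : ℝ} (hr : 0 < r) :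
    mlog (r • ρ) = Real.log r • 1 + mlog ρ := by
  unfold mlog
  have h := cfc_comp_smul (R := ℝ) r Real.log ρ
    (Real.continuousOn_log.mono (by rintro x ⟨y, hy, rfl⟩
                                    have := spectrum_subset_pos hρ hy
                                    have : (0:ℝ) < r * y := mul_pos hr this
                                    simpa [smul_eq_mul] using ne_of_gt this)) hρ.1.isSelfAdjoint
  rw [← h]
  have : ∀ x ∈ spectrum ℝ ρ, Real.log (r • x) = Real.log r + Real.log x := fun x hx => by
    have := spectrum_subset_pos hρ hx
    rw [smul_eq_mul, Real.log_mul (ne_of_gt hr) (ne_of_gt this)]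
  rw [cfc_congr this, cfc_add ρ _ _ (continuousOn_const) (Real.continuousOn_log.mono
    (fun x hx => by simpa using ne_of_gt (spectrum_subset_pos hρ hx)))]
  congr 1
  rw [cfc_const _ _ hρ.1.isSelfAdjoint, Algebra.algebraMap_eq_smul_one]

lemma isHermitian_cfc {A : Mat d} (hA : A.IsHermitian) (f : ℝ → ℝ) :
    (cfc f A).IsHermitian := by
  by_cases hf : ContinuousOn f (spectrum ℝ A)
  · exact cfc_predicate f A
  · rw [cfc_apply_of_not_continuousOn A hf]; exact Matrix.isHermitian_zero

lemma isHermitian_arg {ρ G : Mat d} (hρ : ρ.PosDef) (hG : G.IsHermitian) (α : ℝ) :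
    (mlog ρ - α • G).IsHermitian := by
  have h1 : (mlog ρ).IsHermitian := isHermitian_cfc hρ.1 Real.log
  have h2 : IsSelfAdjoint (α • G) := IsSelfAdjoint.smul (star_trivial α) hG.isSelfAdjoint
  exact h1.sub h2

lemma trace_mexp_eq {A : Mat d} (hA : A.IsHermitian) :
    (mexp A).trace = ((∑ i, Real.exp (hA.eigenvalues i) : ℝ) : ℂ) := by
  rw [mexp, trace_cfc' hA]; push_cast; rfl

lemma egStep_eq_self_of_smul_one (ρ : Mat d) (hρ : ρ.PosDef) (hρ1 : ρ.trace = 1)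
    (μ α : ℝ) : egStep ρ (μ • (1 : Mat d)) α = ρ := by
  have hB : (mlog ρ).IsHermitian := isHermitian_cfc hρ.1 Real.log
  set c : ℝ := α * μ with hc
  have h0 : mlog ρ - α • (μ • (1 : Mat d)) = mlog ρ - c • 1 := by
    rw [smul_smul]
  have h1 : mlog ρ - c • (1 : Mat d) = cfc (fun x => x - c) (mlog ρ) := by
    rw [cfc_sub _ _ _ (by fun_prop) (by fun_prop), cfc_id' ℝ _ hB.isSelfAdjoint,
      cfc_const _ _ hB.isSelfAdjoint, Algebra.algebraMap_eq_smul_one]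
  have h2 : mexp (mlog ρ - c • (1 : Mat d)) = Real.exp (-c) • ρ := by
    rw [h1, mexp, ← cfc_comp Real.exp (fun x => x - c) (mlog ρ) hB.isSelfAdjoint
      (by fun_prop) (by fun_prop)]
    have : (Real.exp ∘ fun x => x - c) = fun x => Real.exp (-c) * Real.exp x := by
      funext x; simp [Function.comp, ← Real.exp_add]; ring_nf
    rw [this, cfc_const_mul _ _ _ (by fun_prop), ← mexp, mexp_mlog hρ]
  have h3 : (mexp (mlog ρ - c • (1 : Mat d))).trace = ((Real.exp (-c) : ℝ) : ℂ) := by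
    rw [h2, Matrix.trace_smul, hρ1]
    simp [Complex.real_smul]
  rw [egStep, h0, h3, h2, ← algebraMap_smul ℂ (Real.exp (-c)) ρ, smul_smul]
  have : ((Real.exp (-c) : ℝ) : ℂ) ≠ 0 := by
    simpa using Real.exp_ne_zero (-c)
  simp only [Complex.coe_algebraMap]
  rw [inv_mul_cancel₀ this, one_smul]

lemma smul_one_of_fixed {ρ G : Mat d} (hd : 0 < d) (hρ : ρ.PosDef) (hG : G.IsHermitian)
    {α : ℝ} (hα : 0 < α) (hfix : ρ = egStep ρ G α) : ∃ μ : ℝ, G = μ • (1 : Mat d) := by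
  have hA : (mlog ρ - α • G).IsHermitian := isHermitian_arg hρ hG α
  set r : ℝ := ∑ i, Real.exp (hA.eigenvalues i) with hr
  have hrpos : 0 < r := Finset.sum_pos (fun i _ => Real.exp_pos _)
    (by simpa using Finset.univ_nonempty_iff.mpr ⟨⟨0, hd⟩⟩)
  have htr : (mexp (mlog ρ - α • G)).trace = (r : ℂ) := trace_mexp_eq hA
  have h1 : mexp (mlog ρ - α • G) = r • ρ := by
    conv_rhs => rw [hfix, egStep, htr]
    rw [← algebraMap_smul ℂ r ((_ : ℂ) • mexp (mlog ρ - α • G)), smul_smul, Complex.coe_algebraMap,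
      mul_inv_cancel₀ (by exact_mod_cast ne_of_gt hrpos), one_smul]
  have h2 : mlog ρ - α • G = Real.log r • 1 + mlog ρ := by
    rw [← mlog_mexp hA, h1, mlog_smul hρ hrpos]
  refine ⟨-Real.log r / α, ?_⟩
  have h3 : α • G = (-Real.log r) • (1 : Mat d) := by
    linear_combination (norm := module) -h2
  have := congrArg (fun M => (α⁻¹ : ℝ) • M) h3
  simp only [smul_smul, inv_mul_cancel₀ (ne_of_gt hα), one_smul] at this
  rw [this, div_eq_inv_mul, mul_comm]

lemma grad_ineq {E : Type*} [NormedAddCommGroup E] [NormedSpace ℝ E] {U : Set E}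
    {f : E → ℝ} (hf : ConvexOn ℝ U f) {x y : E} (hx : x ∈ U) (hy : y ∈ U)
    {L : E →L[ℝ] ℝ} (hL : HasFDerivAt f L x) : L (y - x) ≤ f y - f x := by
  set g : ℝ → ℝ := fun t => f (x + t • (y - x)) with hg
  have hline : HasDerivAt (fun t : ℝ => x + t • (y - x)) (y - x) 0 := by
    simpa using ((hasDerivAt_id (0:ℝ)).smul_const (y - x)).const_add x
  have hg0 : HasDerivAt g (L (y - x)) 0 := by
    have hL' : HasFDerivAt f L ((fun t : ℝ => x + t • (y - x)) 0) := by simpa using hL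
    exact hL'.comp_hasDerivAt 0 hline
  have hslope : Filter.Tendsto (slope g 0) (nhdsWithin 0 (Set.Ioi 0)) (nhds (L (y - x))) :=
    (hasDerivAt_iff_tendsto_slope.mp hg0).mono_left
      (nhdsWithin_mono _ (fun t ht => ne_of_gt ht))
  refine le_of_tendsto hslope ?_
  filter_upwards [Ioc_mem_nhdsGT_of_mem (Set.left_mem_Ico.mpr one_pos)] with t ht
  have h1 : x + t • (y - x) = (1 - t) • x + t • y := by module
  have hcv := hf.2 hx hy (by linarith [ht.2] : (0:ℝ) ≤ 1 - t) (le_of_lt ht.1) (by ring)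
  rw [← h1] at hcv
  have hg00 : g 0 = f x := by simp [hg]
  rw [slope_def_field, sub_zero, div_le_iff₀ ht.1, hg00]
  have hcv' : g t ≤ (1 - t) * f x + t * f y := by simpa [smul_eq_mul] using hcv
  nlinarith [hcv']

lemma psd_perturb (hd : 0 < d) {ρ H : Mat d} (hρ : ρ.PosDef) (hH : H.IsHermitian) :
    ∃ δ > (0:ℝ), ∀ t : ℝ, |t| < δ → (ρ + t • H).PosSemidef := by
  have hne : (Finset.univ : Finset (Fin d)).Nonempty := Finset.univ_nonempty_iff.mpr ⟨⟨0, hd⟩⟩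
  set c : ℝ := Finset.univ.inf' hne hρ.1.eigenvalues with hcdef
  have hc : 0 < c := by
    rw [hcdef, Finset.lt_inf'_iff]
    exact fun i _ => hρ.eigenvalues_pos i
  set M : ℝ := Finset.univ.sup' hne (fun i => |hH.eigenvalues i|) with hMdef
  have hM0 : 0 ≤ M := le_trans (abs_nonneg (hH.eigenvalues ⟨0, hd⟩))
    (Finset.le_sup' (fun i => |hH.eigenvalues i|) (Finset.mem_univ ⟨0, hd⟩))
  refine ⟨c / (M + 1), div_pos hc (by linarith), fun t ht => ?_⟩
  have h1 : ρ - c • 1 = cfc (fun x => x - c) ρ := by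
    rw [cfc_sub _ _ _ (by fun_prop) (by fun_prop), cfc_id' ℝ _ hρ.1.isSelfAdjoint,
      cfc_const _ _ hρ.1.isSelfAdjoint, Algebra.algebraMap_eq_smul_one]
  have h2 : c • (1 : Mat d) + t • H = cfc (fun x => c + t * x) H := by
    rw [cfc_add _ _ _ (by fun_prop) (by fun_prop),
      cfc_const _ _ hH.isSelfAdjoint, Algebra.algebraMap_eq_smul_one,
      cfc_const_mul _ _ _ (by fun_prop), cfc_id' ℝ _ hH.isSelfAdjoint]
  have p1 : (cfc (fun x => x - c) ρ).PosSemidef :=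
    posSemidef_cfc hρ.1 _ (fun i => sub_nonneg.mpr (Finset.inf'_le _ (Finset.mem_univ i)))
  have p2 : (cfc (fun x => c + t * x) H).PosSemidef := by
    refine posSemidef_cfc hH _ (fun i => ?_)
    have hb : |hH.eigenvalues i| ≤ M := Finset.le_sup' (fun i => |hH.eigenvalues i|) (Finset.mem_univ i)
    have h3 : |t * hH.eigenvalues i| ≤ |t| * M := by
      rw [abs_mul]; exact mul_le_mul_of_nonneg_left hb (abs_nonneg t)
    have h4 : |t| * (M + 1) < c := by
      have := (lt_div_iff₀ (by linarith : (0:ℝ) < M + 1)).mp ht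
      linarith [mul_lt_mul_of_pos_right this (by linarith : (0:ℝ) < M + 1)]
    have := neg_abs_le (t * hH.eigenvalues i)
    nlinarith [abs_nonneg t]
  have hsum := p1.add p2
  have heq : (ρ - c • 1) + (c • (1 : Mat d) + t • H) = ρ + t • H := by module
  rw [← h1, ← h2, heq] at hsum
  exact hsum

lemma trace_real_of_hermitian {G : Mat d} (hG : G.IsHermitian) :
    G.trace = ((G.trace.re : ℝ) : ℂ) := by
  have h := Matrix.trace_conjTranspose G
  rw [hG.eq] at h
  exact ((Complex.conj_eq_iff_re.mp h.symm)).symm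

lemma eq_zero_of_re_trace_sq {H : Mat d} (hH : H.IsHermitian)
    (h : (Matrix.trace (H * H)).re = 0) : H = 0 := by
  have h0 : Matrix.trace (H * H) = Matrix.trace (Hᴴ * H) := by rw [hH.eq]
  have h1 : Matrix.trace (Hᴴ * H) = ∑ j, ∑ i, ((starRingEnd ℂ) (H i j) * H i j) := by
    simp [Matrix.trace, Matrix.diag, Matrix.mul_apply, Matrix.conjTranspose_apply]
  have h2 : (Matrix.trace (Hᴴ * H)).re = ∑ j, ∑ i, Complex.normSq (H i j) := by
    rw [h1]; rw [Complex.re_sum]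
    refine Finset.sum_congr rfl (fun j _ => ?_)
    rw [Complex.re_sum]
    refine Finset.sum_congr rfl (fun i _ => ?_)
    rw [← Complex.normSq_eq_conj_mul_self, Complex.ofReal_re]
  rw [h0, h2] at h
  ext i j
  have := (Finset.sum_eq_zero_iff_of_nonneg (fun j _ =>
    Finset.sum_nonneg (fun i _ => Complex.normSq_nonneg _))).mp h
  have := (Finset.sum_eq_zero_iff_of_nonneg (fun i _ => Complex.normSq_nonneg _)).mp
    (this j (Finset.mem_univ j)) i (Finset.mem_univ i)
  simpa using Complex.normSq_eq_zero.mp this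

/-- fixed-point characterization of minimizers of `f` over the density
matrices: a nonsingular density matrix `ρ` minimizes `f` iff `ρ = ρ(α)` for some
(equivalently, all) `α > 0`. -/
theorem stmt_2 {d : ℕ} (hd : 0 < d) (U : Set (Mat d)) (hUopen : IsOpen U)
    (hUconv : Convex ℝ U) (hDU : {σ : Mat d | IsDensity σ} ⊆ U)
    (f : Mat d → ℝ) (f' : Mat d → Mat d)
    (hconv : ConvexOn ℝ U f)
    (hgrad : ∀ x ∈ U, HasMatGradientAt f (f' x) x)
    (hherm : ∀ x ∈ U, (f' x).IsHermitian)
    (ρ : Mat d) (hρ : ρ.PosDef) (hρ1 : ρ.trace = 1) :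
    ((∃ α > (0:ℝ), ρ = egStep ρ (f' ρ) α) → ∀ σ : Mat d, IsDensity σ → f ρ ≤ f σ) ∧
      ((∀ σ : Mat d, IsDensity σ → f ρ ≤ f σ) → ∀ α > (0:ℝ), ρ = egStep ρ (f' ρ) α) := by
  classical
  have hρD : IsDensity ρ := ⟨hρ.posSemidef, hρ1⟩
  have hρU : ρ ∈ U := hDU hρD
  obtain ⟨L, hL, hLspec⟩ := hgrad ρ hρU
  have hG : (f' ρ).IsHermitian := hherm ρ hρU
  constructor
  · rintro ⟨α, hα, hfix⟩ σ hσ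
    obtain ⟨μ, hμ⟩ := smul_one_of_fixed hd hρ hG hα hfix
    have hσU : σ ∈ U := hDU hσ
    have key := grad_ineq hconv hρU hσU hL
    have hL0 : L (σ - ρ) = 0 := by
      rw [hLspec, hμ, ← algebraMap_smul ℂ μ (1 : Mat d), Complex.coe_algebraMap,
        Matrix.conjTranspose_smul, Matrix.conjTranspose_one, Matrix.smul_mul,
        Matrix.trace_smul, one_mul, Matrix.trace_sub, hσ.2, hρ1]
      simp
    have key' : (0:ℝ) ≤ f σ - f ρ := by rw [← hL0]; exact key
    linarith
  · intro hmin α hα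
    set G := f' ρ with hGdef
    set μ : ℝ := G.trace.re / d with hμdef
    set H : Mat d := G - (μ : ℂ) • 1 with hHdef
    have hmuone : ((μ : ℂ) • (1 : Mat d)).IsHermitian := by
      show ((μ : ℂ) • (1 : Mat d))ᴴ = _
      rw [Matrix.conjTranspose_smul, Matrix.conjTranspose_one]
      simp
    have hHherm : H.IsHermitian := hG.sub hmuone
    have htrH : H.trace = 0 := by
      rw [hHdef, Matrix.trace_sub, Matrix.trace_smul, Matrix.trace_one,
        trace_real_of_hermitian hG, hμdef]
      have hd' : (d : ℂ) ≠ 0 := Nat.cast_ne_zero.mpr hd.ne'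
      push_cast
      rw [Fintype.card_fin, smul_eq_mul]
      field_simp
      ring
    obtain ⟨δ, hδ, hδP⟩ := psd_perturb hd hρ hHherm
    have hDens : ∀ t : ℝ, |t| < δ → IsDensity (ρ + t • H) := fun t ht =>
      ⟨hδP t ht, by simp [Matrix.trace_add, Matrix.trace_smul, hρ1, htrH]⟩
    have hmin0 : IsLocalMin (fun t : ℝ => f (ρ + t • H)) 0 := by
      have hev : ∀ᶠ t : ℝ in nhds 0, |t| < δ := by
        have := eventually_abs_sub_lt (0 : ℝ) hδ
        simpa using this
      filter_upwards [hev] with t ht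
      have := hmin _ (hDens t ht)
      simpa using this
    have hline : HasDerivAt (fun t : ℝ => ρ + t • H) H 0 := by
      exact (((hasDerivAt_id (0 : ℝ)).smul_const H).const_add ρ).congr_deriv (one_smul ℝ H)
    have hder : HasDerivAt (fun t : ℝ => f (ρ + t • H)) (L H) 0 := by
      have hL' : HasFDerivAt f L ((fun t : ℝ => ρ + t • H) 0) := by simpa using hL
      exact hL'.comp_hasDerivAt 0 hline
    have hL0 : L H = 0 := hmin0.hasDerivAt_eq_zero hder
    have htr : (Matrix.trace (H * H)).re = 0 := by
      have hGH : Matrix.trace (Gᴴ * H) = Matrix.trace (H * H) := by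
        rw [hG.eq]
        have hGeq : G = H + (μ : ℂ) • 1 := by rw [hHdef]; abel
        rw [hGeq, Matrix.add_mul, Matrix.trace_add, Matrix.smul_mul, Matrix.trace_smul,
          one_mul, htrH]
        simp
      have h5 := hLspec H
      rw [hL0, hGH] at h5
      exact h5.symm
    have hH0 : H = 0 := eq_zero_of_re_trace_sq hHherm htr
    have hGeq : G = μ • (1 : Mat d) := by
      have : G = (μ : ℂ) • 1 := by
        have := sub_eq_zero.mp hH0
        rw [hHdef] at hH0
        linear_combination (norm := module) hH0
      rw [this, ← algebraMap_smul ℂ μ (1 : Mat d), Complex.coe_algebraMap]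
    rw [hGeq]
    exact (egStep_eq_self_of_smul_one ρ hρ hρ1 μ α).symm

end
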